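/- Let G be a connected graph, k a nonnegative integer, and S a minimal trivially perfect completion of G with |S| ≤ k; let H = G+S, and let (B, D) be a block of the universal clique decomposition of H that is neither a leaf block nor the root block, with tail Q. Then: (i) Q = Ω₁ ∩ Ω₂ for some vital potential maximal cliques Ω₁, Ω₂ of (G,k); (ii) B = Q \ Ω₃ for some vital potential maximal clique Ω₃ of (G,k); and (iii) D is the vertex set of the connected component of G − (Q \ B) that contains B. -/

import Mathlib

open SimpleGraph

universe u

/-- A graph is *trivially perfect* if it has no induced subgraph isomorphic to `C₄` or `P₄`. -/
def TriviallyPerfect {V : Type u} (G : SimpleGraph V) : Prop :=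
  IsEmpty (SimpleGraph.cycleGraph 4 ↪g G) ∧ IsEmpty (SimpleGraph.pathGraph 4 ↪g G)

/-- A *universal clique decomposition* of a graph `G`: a finite rooted tree (modelled as a
finite partial order in which the set of elements above any element is a chain and which has
a top element, the root) together with a partition of the vertices into nonempty bags such that
adjacent vertices lie in comparable nodes, and each bag is exactly the set of universal
vertices of the subgraph induced by the union of the bags in the subtree below it. -/
structure UCD {V : Type u} (G : SimpleGraph V) : Type (u + 1) where
  ι : Type u
  [po : PartialOrder ι]
  [ot : OrderTop ι]
  [fin : Fintype ι]
  bag : ι → Set V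
  bag_nonempty : ∀ t, (bag t).Nonempty
  bag_disjoint : ∀ s t, s ≠ t → Disjoint (bag s) (bag t)
  bag_cover : ∀ v, ∃ t, v ∈ bag t
  up_chain : ∀ a b c : ι, a ≤ b → a ≤ c → b ≤ c ∨ c ≤ b
  adj_comparable : ∀ v w s t, G.Adj v w → v ∈ bag t → w ∈ bag s → s ≤ t ∨ t ≤ s
  bag_eq_universal : ∀ t, bag t =
    {v | (∃ s ≤ t, v ∈ bag s) ∧ ∀ w, (∃ s ≤ t, w ∈ bag s) → w ≠ v → G.Adj v w}

attribute [instance] UCD.po UCD.ot UCD.fin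

namespace UCD

variable {V : Type u} {G : SimpleGraph V} (U : UCD G)

/-- `D_t`: the union of the bags in the subtree rooted at `t`. -/
def subtreeSet (t : U.ι) : Set V := {v | ∃ s, s ≤ t ∧ v ∈ U.bag s}

/-- `Q_t`: the union of the bags on the path from `t` to the root. -/
def tailSet (t : U.ι) : Set V := {v | ∃ s, t ≤ s ∧ v ∈ U.bag s}

/-- `t` is a leaf of the decomposition tree. -/
def IsLeaf (t : U.ι) : Prop := ∀ s : U.ι, s ≤ t → s = t

end UCD

/-- `G + S`: the graph obtained from `G` by adding the pairs in `S` as edges. -/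
def completes {V : Type u} (G : SimpleGraph V) (S : Set (Sym2 V)) : SimpleGraph V :=
  G ⊔ SimpleGraph.fromEdgeSet S

/-- `S` is a set of non-edges of `G` (unordered pairs of distinct vertices, none an edge). -/
def IsCompletionSet {V : Type u} (G : SimpleGraph V) (S : Set (Sym2 V)) : Prop :=
  (∀ e ∈ S, ¬ e.IsDiag) ∧ Disjoint S G.edgeSet

/-- `S` is a minimal trivially perfect completion of `G`. -/
def IsMinTPCompletion {V : Type u} (G : SimpleGraph V) (S : Set (Sym2 V)) : Prop :=
  IsCompletionSet G S ∧ TriviallyPerfect (completes G S) ∧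
    ∀ S' ⊂ S, ¬ TriviallyPerfect (completes G S')

/-- A vital potential maximal clique of `(G, k)`. -/
def VitalPMC {V : Type u} (G : SimpleGraph V) (k : ℕ) (Ω : Set V) : Prop :=
  ∃ S, IsMinTPCompletion G S ∧ S.ncard ≤ k ∧ Maximal (completes G S).IsClique Ω

/-!
The tails of the leaves of a universal clique decomposition of `H = G + S` are maximal cliques
of `H`, hence vital, so (i) and (ii) are facts about the tree: no node has exactly one child,
so the tail of an inner node `t` is cut out by leaves below two of its children, and its bag by
a leaf below a sibling.

For (iii), `R = Q \ B` is a clique complete to `D`, and every neighbour of `D` outside `D`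
lies in `R`; so it suffices that `G[D]` is connected. Otherwise colour `D` by the two sides of a
split and delete the fill edges between the colours. In the thinned graph every neighbour of a
vertex of `D` lies in `R` or has the same colour, so a case check shows that an induced `C₄` or
`P₄` contains no two vertices of different colours, and is therefore induced in `G + S` already.
The smaller completion is thus still trivially perfect, contradicting minimality.
-/

namespace SimpleGraph

variable {V : Type*} {α : Type*}

def acrossColours (D : Set V) (c : V → α) : SimpleGraph V where
  Adj v w := v ∈ D ∧ w ∈ D ∧ c v ≠ c w
  symm := ⟨fun _ _ h => ⟨h.2.1, h.1, h.2.2.symm⟩⟩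
  loopless := ⟨fun _ h => h.2.2 rfl⟩

lemma colour_eq_of_sdiff_adj {H : SimpleGraph V} {D : Set V} {c : V → α} {v w : V}
    (hv : v ∈ D) (hw : w ∈ D) (h : (H \ acrossColours D c).Adj v w) : c v = c w :=
  by_contra fun hne => h.2 ⟨hv, hw, hne⟩

def Embedding.liftSdiff {W : Type*} {F : SimpleGraph W} {H X : SimpleGraph V} (f : F ↪g H \ X)
    (hf : ∀ a b, ¬ X.Adj (f a) (f b)) : F ↪g H where
  toEmbedding := f.toEmbedding
  map_rel_iff' {a b} := by
    rw [← f.map_rel_iff, sdiff_adj]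
    exact ⟨fun h => ⟨h, hf a b⟩, And.left⟩

lemma Reachable.mem_of_adj_closed {G : SimpleGraph V} {s : Set V}
    (hs : ∀ ⦃v w⦄, v ∈ s → G.Adj v w → w ∈ s) {u v : V} (huv : G.Reachable u v) (hu : u ∈ s) :
    v ∈ s := by
  rw [reachable_iff_reflTransGen] at huv
  induction huv with
  | refl => exact hu
  | tail _ hadj ih => exact hs ih hadj

structure CliqueBoundary (H : SimpleGraph V) (D R : Set V) : Prop where
  isClique : H.IsClique R
  adj_of_mem : ∀ r ∈ R, ∀ v ∈ D, H.Adj r v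
  mem_of_adj : ∀ v ∈ D, ∀ w, H.Adj v w → w ∈ D ∨ w ∈ R

namespace CliqueBoundary

variable {H : SimpleGraph V} {D R : Set V} {c : V → α}

lemma not_mem_of_mem (hR : CliqueBoundary H D R) {r : V} (hr : r ∈ R) : r ∉ D :=
  fun hrD => (hR.adj_of_mem r hr r hrD).ne rfl

lemma sdiff_adj_of_mem (hR : CliqueBoundary H D R) {r v : V} (hr : r ∈ R) (hv : v ∈ D) :
    (H \ acrossColours D c).Adj r v :=
  ⟨hR.adj_of_mem r hr v hv, fun h => hR.not_mem_of_mem hr h.1⟩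

lemma sdiff_adj_of_mem_of_mem (hR : CliqueBoundary H D R) {r r' : V} (hr : r ∈ R)
    (hr' : r' ∈ R) (hne : r ≠ r') : (H \ acrossColours D c).Adj r r' :=
  ⟨hR.isClique hr hr' hne, fun h => hR.not_mem_of_mem hr h.1⟩

lemma mem_of_sdiff_adj_of_sdiff_adj (hR : CliqueBoundary H D R) {x y z : V}
    (hxy : (acrossColours D c).Adj x y) (hxz : (H \ acrossColours D c).Adj x z)
    (hzy : (H \ acrossColours D c).Adj z y) : z ∈ R := by
  refine (hR.mem_of_adj x hxy.1 z hxz.1).resolve_left fun hz => hxy.2.2 ?_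
  exact (colour_eq_of_sdiff_adj hxy.1 hz hxz).trans
    (colour_eq_of_sdiff_adj hz hxy.2.1 hzy)

lemma false_of_cycle (hR : CliqueBoundary H D R) {a b x d : V}
    (hax : (acrossColours D c).Adj a x)
    (hab : (H \ acrossColours D c).Adj a b) (hbx : (H \ acrossColours D c).Adj b x)
    (hxd : (H \ acrossColours D c).Adj x d) (hda : (H \ acrossColours D c).Adj d a)
    (hbd : b ≠ d) (hnbd : ¬ (H \ acrossColours D c).Adj b d) : False :=
  hnbd <| hR.sdiff_adj_of_mem_of_mem (hR.mem_of_sdiff_adj_of_sdiff_adj hax hab hbx)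
    (hR.mem_of_sdiff_adj_of_sdiff_adj hax hda.symm hxd.symm) hbd

lemma false_of_path_of_adj_zero_two (hR : CliqueBoundary H D R) {x₀ x₁ x₂ x₃ : V}
    (h02 : (acrossColours D c).Adj x₀ x₂)
    (h01 : (H \ acrossColours D c).Adj x₀ x₁) (h12 : (H \ acrossColours D c).Adj x₁ x₂)
    (h23 : (H \ acrossColours D c).Adj x₂ x₃)
    (hn03 : ¬ (H \ acrossColours D c).Adj x₀ x₃)
    (hn13 : ¬ (H \ acrossColours D c).Adj x₁ x₃) : False := by
  have hx₁ : x₁ ∈ R := hR.mem_of_sdiff_adj_of_sdiff_adj h02 h01 h12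
  rcases hR.mem_of_adj x₂ h02.2.1 x₃ h23.1 with hx₃ | hx₃
  · exact hn13 (hR.sdiff_adj_of_mem hx₁ hx₃)
  · exact hn03 (hR.sdiff_adj_of_mem hx₃ h02.1).symm

lemma false_of_path_of_adj_zero_three (hR : CliqueBoundary H D R) {x₀ x₁ x₂ x₃ : V}
    (h03 : (acrossColours D c).Adj x₀ x₃)
    (h01 : (H \ acrossColours D c).Adj x₀ x₁) (h12 : (H \ acrossColours D c).Adj x₁ x₂)
    (h23 : (H \ acrossColours D c).Adj x₂ x₃)
    (hn02 : ¬ (H \ acrossColours D c).Adj x₀ x₂)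
    (hn13 : ¬ (H \ acrossColours D c).Adj x₁ x₃) : False := by
  have hx₁ : x₁ ∈ D := (hR.mem_of_adj x₀ h03.1 x₁ h01.1).resolve_right
    fun h => hn13 (hR.sdiff_adj_of_mem h h03.2.1)
  have hx₂ : x₂ ∈ D := (hR.mem_of_adj x₃ h03.2.1 x₂ h23.1.symm).resolve_right
    fun h => hn02 (hR.sdiff_adj_of_mem h h03.1).symm
  exact h03.2.2 <| (colour_eq_of_sdiff_adj h03.1 hx₁ h01).trans <|
    (colour_eq_of_sdiff_adj hx₁ hx₂ h12).trans (colour_eq_of_sdiff_adj hx₂ h03.2.1 h23)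

lemma not_adj_of_cycleGraph_embedding (hR : CliqueBoundary H D R)
    (f : cycleGraph 4 ↪g H \ acrossColours D c) (i j : Fin 4) :
    ¬ (acrossColours D c).Adj (f i) (f j) := by
  intro hij
  wlog hle : i ≤ j generalizing i j
  · exact this j i hij.symm (le_of_not_ge hle)
  have adj (i j : Fin 4) (h : (cycleGraph 4).Adj i j) :
      (H \ acrossColours D c).Adj (f i) (f j) :=
    f.map_rel_iff.mpr h
  have nadj (i j : Fin 4) (h : ¬ (cycleGraph 4).Adj i j) :
      ¬ (H \ acrossColours D c).Adj (f i) (f j) :=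
    fun h' => h (f.map_rel_iff.mp h')
  have hcases : ∀ i j : Fin 4, i ≤ j →
      i = j ∨ (cycleGraph 4).Adj i j ∨ (i = 0 ∧ j = 2) ∨ (i = 1 ∧ j = 3) := by
    decide
  rcases hcases i j hle with rfl | hadj | ⟨rfl, rfl⟩ | ⟨rfl, rfl⟩
  · exact hij.ne rfl
  · exact (adj i j hadj).2 hij
  · exact hR.false_of_cycle hij (adj 0 1 (by decide)) (adj 1 2 (by decide))
      (adj 2 3 (by decide)) (adj 3 0 (by decide)) (f.injective.ne (by decide))
      (nadj 1 3 (by decide))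
  · exact hR.false_of_cycle hij (adj 1 2 (by decide)) (adj 2 3 (by decide))
      (adj 3 0 (by decide)) (adj 0 1 (by decide)) (f.injective.ne (by decide))
      (nadj 2 0 (by decide))

lemma not_adj_of_pathGraph_embedding (hR : CliqueBoundary H D R)
    (f : pathGraph 4 ↪g H \ acrossColours D c) (i j : Fin 4) :
    ¬ (acrossColours D c).Adj (f i) (f j) := by
  intro hij
  wlog hle : i ≤ j generalizing i j
  · exact this j i hij.symm (le_of_not_ge hle)
  have adj (i j : Fin 4) (h : i.val + 1 = j.val) : (H \ acrossColours D c).Adj (f i) (f j) :=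
    f.map_rel_iff.mpr (pathGraph_adj.mpr (Or.inl h))
  have nadj (i j : Fin 4) (h : ¬ (i.val + 1 = j.val ∨ j.val + 1 = i.val)) :
      ¬ (H \ acrossColours D c).Adj (f i) (f j) :=
    fun h' => h (pathGraph_adj.mp (f.map_rel_iff.mp h'))
  have hcases : ∀ i j : Fin 4, i ≤ j → i = j ∨ (i.val + 1 = j.val ∨ j.val + 1 = i.val) ∨
      (i = 0 ∧ j = 2) ∨ (i = 1 ∧ j = 3) ∨ (i = 0 ∧ j = 3) := by
    decide
  rcases hcases i j hle with rfl | hadj | ⟨rfl, rfl⟩ | ⟨rfl, rfl⟩ | ⟨rfl, rfl⟩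
  · exact hij.ne rfl
  · exact (f.map_rel_iff.mpr (pathGraph_adj.mpr hadj)).2 hij
  · exact hR.false_of_path_of_adj_zero_two hij (adj 0 1 rfl) (adj 1 2 rfl) (adj 2 3 rfl)
      (nadj 0 3 (by decide)) (nadj 1 3 (by decide))
  · exact hR.false_of_path_of_adj_zero_two hij.symm (adj 2 3 rfl).symm (adj 1 2 rfl).symm
      (adj 0 1 rfl).symm (nadj 3 0 (by decide)) (nadj 2 0 (by decide))
  · exact hR.false_of_path_of_adj_zero_three hij (adj 0 1 rfl) (adj 1 2 rfl) (adj 2 3 rfl)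
      (nadj 0 2 (by decide)) (nadj 1 3 (by decide))

lemma eq_image_supp_connectedComponentMk (hR : CliqueBoundary H D R) {G : SimpleGraph V}
    (hGH : G ≤ H) (hconn : (G.induce D).Connected) {b : V} (hbR : b ∈ Rᶜ) (hb : b ∈ D) :
    D = Subtype.val '' ((G.induce Rᶜ).connectedComponentMk ⟨b, hbR⟩).supp := by
  have hDR : D ⊆ Rᶜ := fun v hv hvR => hR.not_mem_of_mem hvR hv
  ext v
  simp only [Set.mem_image, ConnectedComponent.mem_supp_iff, ConnectedComponent.eq]
  constructor
  · intro hv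
    exact ⟨⟨v, hDR hv⟩, ((hconn.preconnected ⟨b, hb⟩ ⟨v, hv⟩).map
      (G.induceHomOfLE hDR).toHom).symm, rfl⟩
  · rintro ⟨w, hw, rfl⟩
    refine hw.symm.mem_of_adj_closed (s := {x : (Rᶜ : Set V) | x.val ∈ D})
      (fun x y hx hxy => ?_) hb
    exact (hR.mem_of_adj x hx y (hGH hxy)).resolve_right y.2

end CliqueBoundary

end SimpleGraph

open SimpleGraph in
theorem TriviallyPerfect.sdiff_acrossColours {V : Type u} {α : Type*} {H : SimpleGraph V}
    {D R : Set V} (hH : TriviallyPerfect H) (hR : CliqueBoundary H D R) (c : V → α) :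
    TriviallyPerfect (H \ acrossColours D c) :=
  ⟨⟨fun f => hH.1.false (f.liftSdiff (hR.not_adj_of_cycleGraph_embedding f))⟩,
    ⟨fun f => hH.2.false (f.liftSdiff (hR.not_adj_of_pathGraph_embedding f))⟩⟩

lemma completes_adj {V : Type u} {G : SimpleGraph V} {S : Set (Sym2 V)} {v w : V} :
    (completes G S).Adj v w ↔ G.Adj v w ∨ (s(v, w) ∈ S ∧ v ≠ w) := by
  simp [completes, fromEdgeSet_adj]

lemma completes_sdiff_edgeSet {V : Type u} {G X : SimpleGraph V} (S : Set (Sym2 V))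
    (hGX : ∀ ⦃v w⦄, G.Adj v w → ¬ X.Adj v w) :
    completes G (S \ X.edgeSet) = completes G S \ X := by
  ext v w
  have := @hGX v w
  simp only [completes_adj, sdiff_adj, Set.mem_sdiff, mem_edgeSet]
  tauto

/-- Colour `D` by reachability from `b` in `G[D]`. -/
theorem IsMinTPCompletion.induce_connected {V : Type u} {G : SimpleGraph V}
    {S : Set (Sym2 V)} {D R : Set V} (hS : IsMinTPCompletion G S)
    (hR : CliqueBoundary (completes G S) D R) {b : V} (hb : b ∈ D)
    (hbD : ∀ v ∈ D, v ≠ b → (completes G S).Adj b v) : (G.induce D).Connected := by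
  rw [connected_iff_exists_forall_reachable]
  refine ⟨⟨b, hb⟩, ?_⟩
  by_contra! ⟨⟨y, hy⟩, hby⟩
  let c : V → Prop := fun v => ∃ hv : v ∈ D, (G.induce D).Reachable ⟨b, hb⟩ ⟨v, hv⟩
  have hGX : ∀ ⦃v w⦄, G.Adj v w → ¬ (acrossColours D c).Adj v w := by
    rintro v w hvw ⟨hv, hw, hne⟩
    have hvw' : (G.induce D).Adj ⟨v, hv⟩ ⟨w, hw⟩ := hvw
    exact hne (propext ⟨fun ⟨_, hr⟩ => ⟨hw, hr.trans hvw'.reachable⟩,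
      fun ⟨_, hr⟩ => ⟨hv, hr.trans hvw'.symm.reachable⟩⟩)
  have hcross : (acrossColours D c).Adj b y :=
    ⟨hb, hy, fun h => hby (h ▸ ⟨hb, Reachable.refl _⟩ : c y).2⟩
  have hbyS : s(b, y) ∈ S := by
    rcases completes_adj.mp (hbD y hy (hcross.ne.symm)) with h | h
    · exact absurd hcross (hGX h)
    · exact h.1
  refine hS.2.2 (S \ (acrossColours D c).edgeSet) ?_ ?_
  · exact Set.sdiff_ssubset_left_iff.mpr ⟨s(b, y), hbyS, hcross⟩
  · rw [completes_sdiff_edgeSet S hGX]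
    exact hS.2.1.sdiff_acrossColours hR c

namespace UCD

variable {V : Type u} {H : SimpleGraph V} (U : UCD H)

lemma eq_of_mem_bag {s s' : U.ι} {v : V} (hs : v ∈ U.bag s) (hs' : v ∈ U.bag s') : s = s' :=
  by_contra fun h => (U.bag_disjoint s s' h).le_bot ⟨hs, hs'⟩

lemma adj_of_le {s s' : U.ι} {v w : V} (h : s ≤ s') (hv : v ∈ U.bag s) (hw : w ∈ U.bag s')
    (hne : v ≠ w) : H.Adj v w := by
  rw [U.bag_eq_universal s'] at hw
  exact (hw.2 v ⟨s, h, hv⟩ hne).symm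

lemma bag_subset_subtreeSet (t : U.ι) : U.bag t ⊆ U.subtreeSet t := fun _ hv => ⟨t, le_rfl, hv⟩

lemma isClique_tailSet (t : U.ι) : H.IsClique (U.tailSet t) := by
  rintro v ⟨s₁, h₁, hv⟩ w ⟨s₂, h₂, hw⟩ hne
  rcases U.up_chain t s₁ s₂ h₁ h₂ with h | h
  · exact U.adj_of_le h hv hw hne
  · exact (U.adj_of_le h hw hv hne.symm).symm

lemma mem_bag_of_mem_subtreeSet_of_mem_tailSet {t : U.ι} {v : V} (h₁ : v ∈ U.subtreeSet t)
    (h₂ : v ∈ U.tailSet t) : v ∈ U.bag t := by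
  obtain ⟨s, hst, hv⟩ := h₁
  obtain ⟨s', hts', hv'⟩ := h₂
  obtain rfl := U.eq_of_mem_bag hv hv'
  exact le_antisymm hst hts' ▸ hv

lemma adj_of_mem_bag_of_mem_subtreeSet {t : U.ι} {b v : V} (hb : b ∈ U.bag t)
    (hv : v ∈ U.subtreeSet t) (hne : v ≠ b) : H.Adj b v := by
  obtain ⟨s, hst, hv⟩ := hv
  exact (U.adj_of_le hst hv hb hne).symm

lemma cliqueBoundary (t : U.ι) :
    CliqueBoundary H (U.subtreeSet t) (U.tailSet t \ U.bag t) where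
  isClique := (U.isClique_tailSet t).subset Set.sdiff_subset
  adj_of_mem r hr v hv := by
    obtain ⟨s', hts', hrs'⟩ := hr.1
    obtain ⟨s, hst, hvs⟩ := hv
    refine (U.adj_of_le (hst.trans hts') hvs hrs' ?_).symm
    rintro rfl
    exact hr.2 (U.mem_bag_of_mem_subtreeSet_of_mem_tailSet ⟨s, hst, hvs⟩ hr.1)
  mem_of_adj v hv w hvw := by
    obtain ⟨s, hst, hvs⟩ := hv
    obtain ⟨s', hws'⟩ := U.bag_cover w
    rcases U.adj_comparable v w s' s hvw hvs hws' with h | h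
    · exact Or.inl ⟨s', h.trans hst, hws'⟩
    rcases U.up_chain s s' t h hst with h' | h'
    · exact Or.inl ⟨s', h', hws'⟩
    · by_cases he : s' = t
      · exact Or.inl ⟨s', he.le, hws'⟩
      · exact Or.inr ⟨⟨s', h', hws'⟩, fun hwt => he (U.eq_of_mem_bag hws' hwt)⟩

lemma maximal_isClique_tailSet {ℓ : U.ι} (hℓ : U.IsLeaf ℓ) : Maximal H.IsClique (U.tailSet ℓ) := by
  refine ⟨U.isClique_tailSet ℓ, fun K hK hsub x hx => ?_⟩
  by_contra hxℓ
  obtain ⟨u, hu⟩ := U.bag_nonempty ℓ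
  obtain ⟨s, hxs⟩ := U.bag_cover x
  have hne : x ≠ u := fun h => hxℓ (h ▸ ⟨ℓ, le_rfl, hu⟩)
  rcases U.adj_comparable x u ℓ s (hK hx (hsub ⟨ℓ, le_rfl, hu⟩) hne) hxs hu with h | h
  · exact hxℓ ⟨s, h, hxs⟩
  · exact hxℓ ⟨s, (hℓ s h).ge, hxs⟩

lemma exists_isLeaf_le (s : U.ι) : ∃ ℓ, ℓ ≤ s ∧ U.IsLeaf ℓ := by
  obtain ⟨ℓ, -, hmin⟩ := exists_minimal_le_of_wellFoundedLT (· ≤ s) s le_rfl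
  exact ⟨ℓ, hmin.1, fun x hx => le_antisymm hx (hmin.2 (hx.trans hmin.1) hx)⟩

/-- If every node below `t` were below `m`, the vertices of `B_m` would be universal in `D_t`
and hence belong to `B_t`. -/
lemma exists_lt_not_le {m t : U.ι} (hmt : m < t) : ∃ s < t, ¬ s ≤ m := by
  by_contra! hall
  obtain ⟨v, hv⟩ := U.bag_nonempty m
  have hvt : v ∈ U.bag t := by
    rw [U.bag_eq_universal t]
    refine ⟨⟨m, hmt.le, hv⟩, fun w ⟨s, hst, hws⟩ hne => ?_⟩
    rcases hst.eq_or_lt with rfl | hlt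
    · exact U.adj_of_le hmt.le hv hws hne.symm
    · exact (U.adj_of_le (hall s hlt) hws hv hne).symm
  exact hmt.ne (U.eq_of_mem_bag hv hvt)

lemma eq_of_covBy_of_le_of_le {m m' t x : U.ι} (hm : m ⋖ t) (hm' : m' ⋖ t) (hxm : x ≤ m)
    (hxm' : x ≤ m') : m = m' := by
  rcases U.up_chain x m m' hxm hxm' with h | h
  · exact ((hm.eq_or_eq h hm'.lt.le).resolve_right hm'.lt.ne).symm
  · exact (hm'.eq_or_eq h hm.lt.le).resolve_right hm.lt.ne

lemma le_of_lt_of_covBy {m t ℓ s : U.ι} (hm : m ⋖ t) (hℓm : ℓ ≤ m) (hℓs : ℓ ≤ s) (hst : s < t) :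
    s ≤ m := by
  rcases U.up_chain ℓ s m hℓs hℓm with h | h
  · exact h
  · exact ((hm.eq_or_eq h hst.le).resolve_right hst.ne).le

lemma le_of_covBy_of_lt {t p s : U.ι} (htp : t ⋖ p) (hts : t < s) : p ≤ s := by
  rcases U.up_chain t p s htp.lt.le hts.le with h | h
  · exact h
  · exact ((htp.eq_or_eq hts.le h).resolve_left hts.ne').ge

lemma exists_covBy_ne {m t : U.ι} (hm : m ⋖ t) : ∃ m', m' ⋖ t ∧ m' ≠ m := by
  obtain ⟨s, hst, hsm⟩ := U.exists_lt_not_le hm.lt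
  obtain ⟨m', hsm', hm'⟩ := exists_le_covBy_of_lt hst
  exact ⟨m', hm', fun h => hsm (h ▸ hsm')⟩

lemma tailSet_inter_tailSet {ℓ₁ ℓ₂ t : U.ι} (h : ∀ s, ℓ₁ ≤ s ∧ ℓ₂ ≤ s ↔ t ≤ s) :
    U.tailSet ℓ₁ ∩ U.tailSet ℓ₂ = U.tailSet t := by
  ext v
  constructor
  · rintro ⟨⟨s, hs₁, hv⟩, ⟨s', hs₂, hv'⟩⟩
    obtain rfl := U.eq_of_mem_bag hv hv'
    exact ⟨s, (h s).mp ⟨hs₁, hs₂⟩, hv⟩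
  · rintro ⟨s, hts, hv⟩
    have := (h s).mpr hts
    exact ⟨⟨s, this.1, hv⟩, ⟨s, this.2, hv⟩⟩

lemma bag_eq_tailSet_diff {ℓ t : U.ι} (h : ∀ s, t ≤ s → (ℓ ≤ s ↔ s ≠ t)) :
    U.bag t = U.tailSet t \ U.tailSet ℓ := by
  ext v
  constructor
  · intro hv
    refine ⟨⟨t, le_rfl, hv⟩, fun ⟨s, hℓs, hvs⟩ => ?_⟩
    obtain rfl := U.eq_of_mem_bag hv hvs
    exact (h t le_rfl).mp hℓs rfl
  · rintro ⟨⟨s, hts, hv⟩, hvℓ⟩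
    by_contra hvt
    exact hvℓ ⟨s, (h s hts).mpr fun hst => hvt (hst ▸ hv), hv⟩

/-- Take leaves below two different children of `t`. -/
lemma exists_tailSet_eq_inter {t : U.ι} (ht : ¬ U.IsLeaf t) :
    ∃ ℓ₁ ℓ₂, U.IsLeaf ℓ₁ ∧ U.IsLeaf ℓ₂ ∧ U.tailSet t = U.tailSet ℓ₁ ∩ U.tailSet ℓ₂ := by
  obtain ⟨s, hst⟩ : ∃ s, s < t := by
    by_contra! h
    exact ht fun s hs => hs.eq_of_not_lt (h s)
  obtain ⟨m₁, -, hm₁⟩ := exists_le_covBy_of_lt hst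
  obtain ⟨m₂, hm₂, hne⟩ := U.exists_covBy_ne hm₁
  obtain ⟨ℓ₁, hℓ₁, hleaf₁⟩ := U.exists_isLeaf_le m₁
  obtain ⟨ℓ₂, hℓ₂, hleaf₂⟩ := U.exists_isLeaf_le m₂
  refine ⟨ℓ₁, ℓ₂, hleaf₁, hleaf₂, (U.tailSet_inter_tailSet fun s => ⟨?_, ?_⟩).symm⟩
  · rintro ⟨hs₁, hs₂⟩
    rcases U.up_chain ℓ₁ t s (hℓ₁.trans hm₁.lt.le) hs₁ with h | h
    · exact h
    obtain rfl | hlt := h.eq_or_lt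
    · exact le_rfl
    exact absurd (U.eq_of_covBy_of_le_of_le hm₂ hm₁ (U.le_of_lt_of_covBy hm₂ hℓ₂ hs₂ hlt)
      (U.le_of_lt_of_covBy hm₁ hℓ₁ hs₁ hlt)) hne
  · intro hts
    exact ⟨hℓ₁.trans (hm₁.lt.le.trans hts), hℓ₂.trans (hm₂.lt.le.trans hts)⟩

/-- Take a leaf below a sibling of `t`. -/
lemma exists_bag_eq_tailSet_diff {t : U.ι} (ht : t ≠ ⊤) :
    ∃ ℓ, U.IsLeaf ℓ ∧ U.bag t = U.tailSet t \ U.tailSet ℓ := by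
  obtain ⟨p, htp, -⟩ := exists_covBy_le_of_lt (lt_top_iff_ne_top.mpr ht)
  obtain ⟨m, hm, hne⟩ := U.exists_covBy_ne htp
  obtain ⟨ℓ, hℓm, hleaf⟩ := U.exists_isLeaf_le m
  refine ⟨ℓ, hleaf, U.bag_eq_tailSet_diff fun s hts => ⟨?_, ?_⟩⟩
  · rintro hℓs rfl
    exact hne (U.eq_of_covBy_of_le_of_le hm htp hℓm hℓs)
  · intro hst
    exact hℓm.trans (hm.lt.le.trans (U.le_of_covBy_of_lt htp (hts.lt_of_ne' hst)))

end UCD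

theorem minTPCompletion_internal_block_structure_general {V : Type u}
    (G : SimpleGraph V) (k : ℕ)
    (S : Set (Sym2 V)) (hS : IsMinTPCompletion G S) (hcard : S.ncard ≤ k)
    (U : UCD (completes G S)) (t : U.ι) (hleaf : ¬ U.IsLeaf t) (hroot : t ≠ ⊤) :
    (∃ Ω₁ Ω₂ : Set V, VitalPMC G k Ω₁ ∧ VitalPMC G k Ω₂ ∧ U.tailSet t = Ω₁ ∩ Ω₂) ∧
    (∃ Ω₃ : Set V, VitalPMC G k Ω₃ ∧ U.bag t = U.tailSet t \ Ω₃) ∧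
    (∀ b (hb : b ∈ U.bag t) (hb' : b ∈ (U.tailSet t \ U.bag t)ᶜ),
      U.subtreeSet t = Subtype.val ''
        ((G.induce ((U.tailSet t \ U.bag t)ᶜ)).connectedComponentMk ⟨b, hb'⟩).supp) := by
  have vital {ℓ : U.ι} (hℓ : U.IsLeaf ℓ) : VitalPMC G k (U.tailSet ℓ) :=
    ⟨S, hS, hcard, U.maximal_isClique_tailSet hℓ⟩
  obtain ⟨ℓ₁, ℓ₂, hℓ₁, hℓ₂, hQ⟩ := U.exists_tailSet_eq_inter hleaf
  obtain ⟨ℓ₃, hℓ₃, hB⟩ := U.exists_bag_eq_tailSet_diff hroot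
  refine ⟨⟨_, _, vital hℓ₁, vital hℓ₂, hQ⟩, ⟨_, vital hℓ₃, hB⟩, fun b hb hb' => ?_⟩
  have hbD := U.bag_subset_subtreeSet t hb
  have hconn : (G.induce (U.subtreeSet t)).Connected :=
    hS.induce_connected (U.cliqueBoundary t) hbD
      fun _ => U.adj_of_mem_bag_of_mem_subtreeSet hb
  exact (U.cliqueBoundary t).eq_image_supp_connectedComponentMk le_sup_left hconn hb' hbD

/-- Structure of a non-leaf, non-root block `(B, D)` with tail `Q` of the universal clique
decomposition of a minimal trivially perfect completion `H = G + S` with `|S| ≤ k`: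
(i) `Q` is the intersection of two vital potential maximal cliques; (ii) `B = Q \ Ω₃` for a
vital potential maximal clique `Ω₃`; (iii) `D` is the connected component of `G - (Q \ B)`
containing `B`. -/
theorem minTPCompletion_internal_block_structure {V : Type u} [Fintype V]
    (G : SimpleGraph V) (hG : G.Connected) (k : ℕ)
    (S : Set (Sym2 V)) (hS : IsMinTPCompletion G S) (hcard : S.ncard ≤ k)
    (U : UCD (completes G S)) (t : U.ι) (hleaf : ¬ U.IsLeaf t) (hroot : t ≠ ⊤) :
    (∃ Ω₁ Ω₂ : Set V, VitalPMC G k Ω₁ ∧ VitalPMC G k Ω₂ ∧ U.tailSet t = Ω₁ ∩ Ω₂) ∧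
    (∃ Ω₃ : Set V, VitalPMC G k Ω₃ ∧ U.bag t = U.tailSet t \ Ω₃) ∧
    (∀ b (hb : b ∈ U.bag t) (hb' : b ∈ (U.tailSet t \ U.bag t)ᶜ),
      U.subtreeSet t = Subtype.val ''
        ((G.induce ((U.tailSet t \ U.bag t)ᶜ)).connectedComponentMk ⟨b, hb'⟩).supp) :=
  minTPCompletion_internal_block_structure_general G k S hS hcard U t hleaf hroot
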